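/- For all graphs G and H, each having at least one edge, the distance-numbers of the cartesian product G □ H satisfy max{ddn(G), ddn(H)} ≤ ddn(G □ H) ≤ ddn(G) + ddn(H) − 1 and max{dn(G), dn(H)} ≤ dn(G □ H) ≤ dn(G) + dn(H) − 1. -/

import Mathlib

noncomputable section

/-- The Euclidean plane. -/
abbrev Plane : Type := EuclideanSpace ℝ (Fin 2)

/-- The set of edge-lengths determined by a map `f` of the vertices of `G` to the plane. -/
def SimpleGraph.edgeLengths {V : Type*} (G : SimpleGraph V) (f : V → Plane) : Set ℝ :=
  {d : ℝ | ∃ u v : V, G.Adj u v ∧ Dist.dist (f u) (f v) = d}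

/-- A degenerate drawing of `G`: an injective map from the vertices to the plane. -/
def SimpleGraph.IsDegenDrawing {V : Type*} (_G : SimpleGraph V) (f : V → Plane) : Prop :=
  Function.Injective f

/-- A drawing of `G`: a degenerate drawing such that no vertex lies on the open segment
representing an edge. -/
def SimpleGraph.IsDrawing {V : Type*} (G : SimpleGraph V) (f : V → Plane) : Prop :=
  Function.Injective f ∧ ∀ u v w : V, G.Adj u v → f w ∉ openSegment ℝ (f u) (f v)

/-- The degenerate distance-number of `G`: the minimum number of distinct edge-lengths
in a degenerate drawing of `G`. -/
def SimpleGraph.ddn {V : Type*} (G : SimpleGraph V) : ℕ :=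
  sInf {k : ℕ | ∃ f : V → Plane, G.IsDegenDrawing f ∧ (G.edgeLengths f).ncard = k}

/-- The distance-number of `G`: the minimum number of distinct edge-lengths
in a drawing of `G`. -/
def SimpleGraph.dn {V : Type*} (G : SimpleGraph V) : ℕ :=
  sInf {k : ℕ | ∃ f : V → Plane, G.IsDrawing f ∧ (G.edgeLengths f).ncard = k}

/-!
Restricting a drawing of `G □ H` to a copy of `G` or of `H` gives a drawing of that factor whose
edge lengths are among those of the product; this gives the lower bounds.

For the upper bounds, identify the plane with `ℂ` and put the vertex `(v, w)` at `F v + c * Z w`,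
where `F` and `Z` are optimal drawings of `G` and `H` and `c = μ u` with `‖u‖ = 1`. Edges of the
`G`-layers keep their lengths, edges of the `H`-layers are scaled by `μ`, and `μ` is chosen so
that one scaled length of `H` is a length of `G`, which saves one length. It remains to choose
`u` on the unit circle: injectivity fails for only finitely many `u`, and for fixed vertices
`p`, `q`, `r` the collinearity condition `Im (conj (p - r) * (q - r)) = 0` reads
`Im (u * M) = const`, with `M ≠ 0` unless `r` lies in the layer of the edge `pq`, where the
drawing of the factor already keeps `r` off the segment. Such a condition cuts the circle in at
most two points.
-/

open Function Set Complex ComplexConjugate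

instance Circle.instInfinite : Infinite Circle :=
  Set.infinite_univ_iff.mp <| ((Set.Ico_infinite Real.two_pi_pos).image
    (Circle.exp_injOn_Ico (by simp))).mono (subset_univ _)

theorem Function.Injective.mem_openSegment_map_iff {𝕜 E F : Type*} [Semiring 𝕜]
    [PartialOrder 𝕜] [AddCommMonoid E] [Module 𝕜 E] [AddCommMonoid F] [Module 𝕜 F]
    {L : E →ₗ[𝕜] F} (hL : Injective L) {x y z : E} :
    L x ∈ openSegment 𝕜 (L y) (L z) ↔ x ∈ openSegment 𝕜 y z := by
  constructor
  · rintro ⟨a, b, ha, hb, hab, h⟩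
    exact ⟨a, b, ha, hb, hab, hL (by simpa using h)⟩
  · rintro ⟨a, b, ha, hb, hab, rfl⟩
    exact ⟨a, b, ha, hb, hab, by simp⟩

theorem Set.ncard_union_le_ncard_add_ncard_sub_one {α : Type*} {s t : Set α} (hs : s.Finite)
    (ht : t.Finite) (hst : (s ∩ t).Nonempty) : (s ∪ t).ncard ≤ s.ncard + t.ncard - 1 := by
  have := ncard_union_add_ncard_inter s t hs ht
  have := (ncard_pos (hs.inter_of_left t)).2 hst
  omega

namespace Complex

theorem im_conj_mul_eq_zero_of_mem_openSegment {x y z : ℂ} (h : x ∈ openSegment ℝ y z) :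
    (conj (y - x) * (z - x)).im = 0 := by
  obtain ⟨s, t, -, -, hst, rfl⟩ := h
  obtain rfl : s = 1 - t := by linarith
  simp only [real_smul, mul_im, sub_re, sub_im, add_re, add_im, mul_re, conj_re, conj_im,
    ofReal_re, ofReal_im]
  ring

theorem im_conj_add_mul_mul_add_mul (A B C D c : ℂ) :
    (conj (A + c * B) * (C + c * D)).im =
      (conj A * C).im + normSq c * (conj B * D).im + (c * (conj A * D - B * conj C)).im := by
  simp only [mul_im, mul_re, add_re, add_im, sub_re, sub_im, conj_re, conj_im, normSq_apply]
  ring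

theorem finite_setOf_im_mul_eq {M : ℂ} (hM : M ≠ 0) (A : ℝ) :
    {u : Circle | (u * M).im = A}.Finite := by
  set s := √(‖M‖ ^ 2 - A ^ 2)
  have hinj : Injective fun u : Circle => (u : ℂ) * M :=
    fun u v h => Circle.coe_injective (mul_right_cancel₀ hM h)
  refine ((finite_singleton (⟨s, A⟩ : ℂ)).insert ⟨-s, A⟩ |>.preimage hinj.injOn).subset ?_
  intro u (hu : ((u : ℂ) * M).im = A)
  have hz : (↑u * M).re ^ 2 = ‖M‖ ^ 2 - A ^ 2 := by
    have : ‖(u : ℂ) * M‖ = ‖M‖ := by rw [norm_mul, Circle.norm_coe, one_mul]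
    rw [← hu, ← this, ← normSq_eq_norm_sq, normSq_apply]
    ring
  have hre : (↑u * M).re = s ∨ (↑u * M).re = -s := by
    rw [← sq_eq_sq_iff_eq_or_eq_neg, Real.sq_sqrt (hz ▸ sq_nonneg _), hz]
  rcases hre with hre | hre
  · exact Or.inr (Complex.ext hre hu)
  · exact Or.inl (Complex.ext hre hu)

end Complex

section BoxCombine

variable {V W : Type*} (F : V → ℂ) (Z : W → ℂ)

def boxCombine (c : ℂ) (p : V × W) : ℂ := F p.1 + c * Z p.2

variable {F Z}

theorem boxCombine_sub_of_snd_eq {c : ℂ} {p q : V × W} (h : p.2 = q.2) :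
    boxCombine F Z c p - boxCombine F Z c q = F p.1 - F q.1 := by
  simp only [boxCombine, h]; ring

theorem boxCombine_sub_of_fst_eq {c : ℂ} {p q : V × W} (h : p.1 = q.1) :
    boxCombine F Z c p - boxCombine F Z c q = c * (Z p.2 - Z q.2) := by
  simp only [boxCombine, h]; ring

theorem finite_setOf_not_injective_boxCombine [Finite V] [Finite W] (hF : Injective F)
    (hZ : Injective Z) {μ : ℝ} (hμ : μ ≠ 0) :
    {u : Circle | ¬Injective (boxCombine F Z (μ * u))}.Finite := by
  refine ((finite_range fun pq : (V × W) × (V × W) =>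
      (F pq.2.1 - F pq.1.1) / (μ * (Z pq.1.2 - Z pq.2.2))).preimage
    Circle.coe_injective.injOn).subset ?_
  intro u hu
  obtain ⟨p, q, hpq, hne⟩ := not_injective_iff.mp hu
  have hZpq : Z p.2 - Z q.2 ≠ 0 := by
    refine sub_ne_zero.mpr fun hZpq => hne (Prod.ext (hF ?_) (hZ hZpq))
    simpa [boxCombine, hZpq] using hpq
  refine ⟨(p, q), (div_eq_iff (mul_ne_zero (ofReal_ne_zero.mpr hμ) hZpq)).mpr ?_⟩
  simp only [boxCombine] at hpq
  linear_combination -hpq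

theorem finite_setOf_boxCombine_mem_openSegment {μ : ℝ} (hμ : μ ≠ 0) {p q r : V × W}
    (hM : conj (F p.1 - F r.1) * (Z q.2 - Z r.2) - (Z p.2 - Z r.2) * conj (F q.1 - F r.1) ≠ 0) :
    {u : Circle | boxCombine F Z (μ * u) r ∈
      openSegment ℝ (boxCombine F Z (μ * u) p) (boxCombine F Z (μ * u) q)}.Finite := by
  set M := conj (F p.1 - F r.1) * (Z q.2 - Z r.2) - (Z p.2 - Z r.2) * conj (F q.1 - F r.1)
  refine (finite_setOf_im_mul_eq (mul_ne_zero (ofReal_ne_zero.mpr hμ) hM)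
    (-((conj (F p.1 - F r.1) * (F q.1 - F r.1)).im +
      μ ^ 2 * (conj (Z p.2 - Z r.2) * (Z q.2 - Z r.2)).im))).subset ?_
  intro u hu
  have h := im_conj_mul_eq_zero_of_mem_openSegment hu
  have hsub : ∀ s : V × W, boxCombine F Z (μ * u) s - boxCombine F Z (μ * u) r =
      (F s.1 - F r.1) + (μ * u) * (Z s.2 - Z r.2) := fun s => by simp only [boxCombine]; ring
  have hnorm : normSq ((μ : ℂ) * u) = μ ^ 2 := by
    rw [normSq_mul, normSq_ofReal, normSq_eq_norm_sq, Circle.norm_coe]; ring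
  rw [hsub, hsub, im_conj_add_mul_mul_add_mul, hnorm] at h
  show ((u : ℂ) * (μ * M)).im = _
  rw [show (u : ℂ) * (μ * M) = μ * u * M by ring]
  linarith

end BoxCombine

def planeEquiv : ℂ ≃ₗᵢ[ℝ] Plane := Complex.orthonormalBasisOneI.repr

theorem planeEquiv_mem_openSegment_iff {x y z : ℂ} :
    planeEquiv x ∈ openSegment ℝ (planeEquiv y) (planeEquiv z) ↔ x ∈ openSegment ℝ y z :=
  Injective.mem_openSegment_map_iff (L := planeEquiv.toLinearEquiv.toLinearMap)
    planeEquiv.injective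

namespace SimpleGraph

variable {V V' W : Type*} {G : SimpleGraph V} {G' : SimpleGraph V'} {H : SimpleGraph W}
  {F : V → ℂ} {Z : W → ℂ} {μ : ℝ}

theorem isDrawing_planeEquiv_comp_iff {F : V → ℂ} :
    G.IsDrawing (planeEquiv ∘ F) ↔
      Injective F ∧ ∀ u v w, G.Adj u v → F w ∉ openSegment ℝ (F u) (F v) := by
  simp only [IsDrawing, planeEquiv.injective.of_comp_iff, comp_apply,
    planeEquiv_mem_openSegment_iff]

theorem IsDrawing.isDegenDrawing {f : V → Plane} (hf : G.IsDrawing f) : G.IsDegenDrawing f :=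
  hf.1

theorem IsDrawing.comp_embedding {f : V' → Plane} (hf : G'.IsDrawing f) (φ : G ↪g G') :
    G.IsDrawing (f ∘ φ) :=
  ⟨hf.1.comp φ.injective, fun _ _ _ huv => hf.2 _ _ _ (φ.map_adj_iff.mpr huv)⟩

variable (G) in
theorem edgeLengths_finite [Finite V] (f : V → Plane) : (G.edgeLengths f).Finite :=
  (finite_range fun p : V × V => Dist.dist (f p.1) (f p.2)).subset
    fun _ ⟨u, v, _, hd⟩ => ⟨(u, v), hd⟩

theorem edgeLengths_comp_subset (φ : G →g G') (f : V' → Plane) :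
    G.edgeLengths (f ∘ φ) ⊆ G'.edgeLengths f :=
  fun _ ⟨u, v, huv, hd⟩ => ⟨φ u, φ v, φ.map_adj huv, hd⟩

/-- Vertices on a parabola: no three points of a strictly convex curve are collinear. -/
theorem exists_isDrawing [Countable V] (G : SimpleGraph V) : ∃ f, G.IsDrawing f := by
  obtain ⟨n, hn⟩ := Countable.exists_injective_nat V
  have hx : Injective fun v => (n v : ℝ) := Nat.cast_injective.comp hn
  refine ⟨planeEquiv ∘ fun v => ⟨n v, (n v : ℝ) ^ 2⟩,
    isDrawing_planeEquiv_comp_iff.mpr ⟨fun a b h => hx (congrArg re h), ?_⟩⟩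
  rintro a b c hab ⟨s, t, hs, ht, hst, h⟩
  have hre := congrArg re h
  have him := congrArg im h
  simp only [add_re, add_im, real_smul, re_ofReal_mul, im_ofReal_mul] at hre him
  have := (Even.strictConvexOn_pow even_two two_ne_zero).2 (mem_univ _) (mem_univ _)
    (hx.ne hab.ne) hs ht hst
  simp only [smul_eq_mul] at this
  rw [hre, him] at this
  exact lt_irrefl _ this

theorem ddn_le_ncard_edgeLengths {f : V → Plane} (hf : G.IsDegenDrawing f) :
    G.ddn ≤ (G.edgeLengths f).ncard :=
  Nat.sInf_le ⟨f, hf, rfl⟩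

theorem dn_le_ncard_edgeLengths {f : V → Plane} (hf : G.IsDrawing f) :
    G.dn ≤ (G.edgeLengths f).ncard :=
  Nat.sInf_le ⟨f, hf, rfl⟩

variable (G) in
theorem exists_isDegenDrawing_ncard_edgeLengths_eq_ddn [Countable V] :
    ∃ f, G.IsDegenDrawing f ∧ (G.edgeLengths f).ncard = G.ddn := by
  obtain ⟨f, hf⟩ := G.exists_isDrawing
  exact Nat.sInf_mem (s := {k | ∃ f, G.IsDegenDrawing f ∧ (G.edgeLengths f).ncard = k})
    ⟨_, f, hf.isDegenDrawing, rfl⟩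

variable (G) in
theorem exists_isDrawing_ncard_edgeLengths_eq_dn [Countable V] :
    ∃ f, G.IsDrawing f ∧ (G.edgeLengths f).ncard = G.dn := by
  obtain ⟨f, hf⟩ := G.exists_isDrawing
  exact Nat.sInf_mem (s := {k | ∃ f, G.IsDrawing f ∧ (G.edgeLengths f).ncard = k})
    ⟨_, f, hf, rfl⟩

theorem Embedding.ddn_le [Finite V'] (φ : G ↪g G') : G.ddn ≤ G'.ddn := by
  obtain ⟨f, hf, hcard⟩ := G'.exists_isDegenDrawing_ncard_edgeLengths_eq_ddn
  calc G.ddn ≤ (G.edgeLengths (f ∘ φ)).ncard := ddn_le_ncard_edgeLengths (hf.comp φ.injective)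
    _ ≤ (G'.edgeLengths f).ncard :=
      ncard_le_ncard (edgeLengths_comp_subset φ.toHom f) (G'.edgeLengths_finite f)
    _ = G'.ddn := hcard

theorem Embedding.dn_le [Finite V'] (φ : G ↪g G') : G.dn ≤ G'.dn := by
  obtain ⟨f, hf, hcard⟩ := G'.exists_isDrawing_ncard_edgeLengths_eq_dn
  calc G.dn ≤ (G.edgeLengths (f ∘ φ)).ncard := dn_le_ncard_edgeLengths (hf.comp_embedding φ)
    _ ≤ (G'.edgeLengths f).ncard :=
      ncard_le_ncard (edgeLengths_comp_subset φ.toHom f) (G'.edgeLengths_finite f)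
    _ = G'.dn := hcard

theorem edgeLengths_boxProd_boxCombine_subset (c : ℂ) :
    (G □ H).edgeLengths (planeEquiv ∘ boxCombine F Z c) ⊆
      G.edgeLengths (planeEquiv ∘ F) ∪ (‖c‖ * ·) '' H.edgeLengths (planeEquiv ∘ Z) := by
  rintro _ ⟨p, q, ⟨hpq, h2⟩ | ⟨hpq, h1⟩, rfl⟩
  · refine Or.inl ⟨p.1, q.1, hpq, ?_⟩
    simp only [comp_apply, planeEquiv.dist_map, dist_eq_norm, boxCombine_sub_of_snd_eq h2]
  · refine Or.inr ⟨_, ⟨p.2, q.2, hpq, rfl⟩, ?_⟩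
    simp only [comp_apply, planeEquiv.dist_map, dist_eq_norm, boxCombine_sub_of_fst_eq h1,
      norm_mul]

theorem ncard_edgeLengths_boxProd_le [Finite V] [Finite W] {a b : V} {a' b' : W}
    (hab : G.Adj a b) (hab' : H.Adj a' b') (hZ : Z a' ≠ Z b') (u : Circle) :
    ((G □ H).edgeLengths (planeEquiv ∘
        boxCombine F Z ((Dist.dist (F a) (F b) / Dist.dist (Z a') (Z b') : ℝ) * u))).ncard ≤
      (G.edgeLengths (planeEquiv ∘ F)).ncard + (H.edgeLengths (planeEquiv ∘ Z)).ncard - 1 := by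
  set c : ℂ := (Dist.dist (F a) (F b) / Dist.dist (Z a') (Z b') : ℝ) * u
  set L := G.edgeLengths (planeEquiv ∘ F)
  set L' := H.edgeLengths (planeEquiv ∘ Z)
  have hL' : ((‖c‖ * ·) '' L').Finite := (H.edgeLengths_finite _).image _
  have hc : ‖c‖ * Dist.dist (Z a') (Z b') = Dist.dist (F a) (F b) := by
    rw [norm_mul, Circle.norm_coe, mul_one, norm_real, Real.norm_of_nonneg (by positivity),
      div_mul_cancel₀ _ (dist_ne_zero.mpr hZ)]
  have hshared : Dist.dist (F a) (F b) ∈ L ∩ (‖c‖ * ·) '' L' :=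
    ⟨⟨a, b, hab, planeEquiv.dist_map _ _⟩, _, ⟨a', b', hab', planeEquiv.dist_map _ _⟩, hc⟩
  calc _ ≤ (L ∪ (‖c‖ * ·) '' L').ncard :=
        ncard_le_ncard (edgeLengths_boxProd_boxCombine_subset c)
          ((G.edgeLengths_finite _).union hL')
    _ ≤ L.ncard + ((‖c‖ * ·) '' L').ncard - 1 :=
        ncard_union_le_ncard_add_ncard_sub_one (G.edgeLengths_finite _) hL' ⟨_, hshared⟩
    _ ≤ L.ncard + L'.ncard - 1 := by
        have := ncard_image_le (f := (‖c‖ * ·)) (s := L') (H.edgeLengths_finite _)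
        omega

theorem finite_setOf_boxCombine_mem_openSegment_of_adj_left
    (hF : G.IsDrawing (planeEquiv ∘ F)) (hμ : μ ≠ 0) {p q : V × W} (hpq : G.Adj p.1 q.1)
    (h2 : p.2 = q.2) (r : V × W) :
    {u : Circle | boxCombine F Z (μ * u) r ∈
      openSegment ℝ (boxCombine F Z (μ * u) p) (boxCombine F Z (μ * u) q)}.Finite := by
  rw [isDrawing_planeEquiv_comp_iff] at hF
  by_cases hr : Z r.2 = Z p.2
  · refine finite_empty.subset fun u hu => hF.2 p.1 q.1 r.1 hpq ?_
    simpa only [boxCombine, hr, ← h2, add_comm _ (_ * Z p.2), mem_ofPred_eq,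
      mem_openSegment_translate] using hu
  · refine finite_setOf_boxCombine_mem_openSegment hμ ?_
    rw [← h2, show ∀ x y z w : ℂ, conj (x - z) * w - w * conj (y - z) = w * conj (x - y) by
      intros; simp only [map_sub]; ring]
    exact mul_ne_zero (sub_ne_zero.mpr (Ne.symm hr))
      ((map_ne_zero _).mpr (sub_ne_zero.mpr (hF.1.ne hpq.ne)))

theorem finite_setOf_boxCombine_mem_openSegment_of_adj_right
    (hZ : H.IsDrawing (planeEquiv ∘ Z)) (hμ : μ ≠ 0) {p q : V × W} (hpq : H.Adj p.2 q.2)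
    (h1 : p.1 = q.1) (r : V × W) :
    {u : Circle | boxCombine F Z (μ * u) r ∈
      openSegment ℝ (boxCombine F Z (μ * u) p) (boxCombine F Z (μ * u) q)}.Finite := by
  rw [isDrawing_planeEquiv_comp_iff] at hZ
  by_cases hr : F r.1 = F p.1
  · refine finite_empty.subset fun u hu => hZ.2 p.2 q.2 r.2 hpq ?_
    have hc : (μ : ℂ) * u ≠ 0 := mul_ne_zero (ofReal_ne_zero.mpr hμ) u.coe_ne_zero
    rw [← (mul_right_injective₀ hc).mem_openSegment_map_iff (L := LinearMap.mulLeft ℝ _)]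
    simpa only [boxCombine, hr, ← h1, LinearMap.mulLeft_apply, mem_ofPred_eq,
      mem_openSegment_translate] using hu
  · refine finite_setOf_boxCombine_mem_openSegment hμ ?_
    rw [← h1, show ∀ x y z w : ℂ, conj x * (y - w) - (z - w) * conj x = conj x * (y - z) by
      intros; ring]
    exact mul_ne_zero ((map_ne_zero _).mpr (sub_ne_zero.mpr (Ne.symm hr)))
      (sub_ne_zero.mpr (hZ.1.ne hpq.ne'))

theorem exists_circle_injective_boxCombine [Finite V] [Finite W] (hF : Injective F)
    (hZ : Injective Z) (hμ : μ ≠ 0) : ∃ u : Circle, Injective (boxCombine F Z (μ * u)) :=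
  (finite_setOf_not_injective_boxCombine hF hZ hμ).infinite_compl.nonempty.imp
    fun _ hu => not_not.mp hu

theorem exists_circle_isDrawing_boxCombine [Finite V] [Finite W]
    (hF : G.IsDrawing (planeEquiv ∘ F)) (hZ : H.IsDrawing (planeEquiv ∘ Z)) (hμ : μ ≠ 0) :
    ∃ u : Circle, (G □ H).IsDrawing (planeEquiv ∘ boxCombine F Z (μ * u)) := by
  set bad := ⋃ t ∈ {t : (V × W) × (V × W) × (V × W) | (G □ H).Adj t.1 t.2.1},
    {u : Circle | boxCombine F Z (μ * u) t.2.2 ∈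
      openSegment ℝ (boxCombine F Z (μ * u) t.1) (boxCombine F Z (μ * u) t.2.1)}
  have hbad : bad.Finite := (toFinite _).biUnion fun t ht => by
    rcases ht with ⟨hpq, h2⟩ | ⟨hpq, h1⟩
    · exact finite_setOf_boxCombine_mem_openSegment_of_adj_left hF hμ hpq h2 t.2.2
    · exact finite_setOf_boxCombine_mem_openSegment_of_adj_right hZ hμ hpq h1 t.2.2
  obtain ⟨u, hu⟩ := ((finite_setOf_not_injective_boxCombine
    (isDrawing_planeEquiv_comp_iff.mp hF).1 (isDrawing_planeEquiv_comp_iff.mp hZ).1 hμ).union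
      hbad).infinite_compl.nonempty
  simp only [mem_compl_iff, mem_union, mem_ofPred_eq, not_or, not_not] at hu
  exact ⟨u, isDrawing_planeEquiv_comp_iff.mpr
    ⟨hu.1, fun p q r hpq hr => hu.2 (mem_biUnion (x := (p, q, r)) hpq hr)⟩⟩

theorem ddn_boxProd_le [Finite V] [Finite W] (hG : G.edgeSet.Nonempty)
    (hH : H.edgeSet.Nonempty) : (G □ H).ddn ≤ G.ddn + H.ddn - 1 := by
  obtain ⟨a, b, hab⟩ := G.ne_bot_iff_exists_adj.mp (edgeSet_nonempty.mp hG)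
  obtain ⟨a', b', hab'⟩ := H.ne_bot_iff_exists_adj.mp (edgeSet_nonempty.mp hH)
  obtain ⟨f, hf, hf_card⟩ := G.exists_isDegenDrawing_ncard_edgeLengths_eq_ddn
  obtain ⟨g, hg, hg_card⟩ := H.exists_isDegenDrawing_ncard_edgeLengths_eq_ddn
  obtain ⟨F, rfl⟩ := planeEquiv.surjective.comp_left f
  obtain ⟨Z, rfl⟩ := planeEquiv.surjective.comp_left g
  replace hf := (planeEquiv.injective.of_comp_iff F).mp hf
  replace hg := (planeEquiv.injective.of_comp_iff Z).mp hg
  obtain ⟨u, hu⟩ := exists_circle_injective_boxCombine hf hg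
    (div_pos (dist_pos.mpr (hf.ne hab.ne)) (dist_pos.mpr (hg.ne hab'.ne))).ne'
  calc (G □ H).ddn ≤ _ := ddn_le_ncard_edgeLengths (planeEquiv.injective.comp hu)
    _ ≤ _ := ncard_edgeLengths_boxProd_le hab hab' (hg.ne hab'.ne) u
    _ = G.ddn + H.ddn - 1 := by rw [hf_card, hg_card]

theorem dn_boxProd_le [Finite V] [Finite W] (hG : G.edgeSet.Nonempty)
    (hH : H.edgeSet.Nonempty) : (G □ H).dn ≤ G.dn + H.dn - 1 := by
  obtain ⟨a, b, hab⟩ := G.ne_bot_iff_exists_adj.mp (edgeSet_nonempty.mp hG)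
  obtain ⟨a', b', hab'⟩ := H.ne_bot_iff_exists_adj.mp (edgeSet_nonempty.mp hH)
  obtain ⟨f, hf, hf_card⟩ := G.exists_isDrawing_ncard_edgeLengths_eq_dn
  obtain ⟨g, hg, hg_card⟩ := H.exists_isDrawing_ncard_edgeLengths_eq_dn
  obtain ⟨F, rfl⟩ := planeEquiv.surjective.comp_left f
  obtain ⟨Z, rfl⟩ := planeEquiv.surjective.comp_left g
  have hFinj := (isDrawing_planeEquiv_comp_iff.mp hf).1
  have hZinj := (isDrawing_planeEquiv_comp_iff.mp hg).1
  obtain ⟨u, hu⟩ := exists_circle_isDrawing_boxCombine hf hg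
    (div_pos (dist_pos.mpr (hFinj.ne hab.ne)) (dist_pos.mpr (hZinj.ne hab'.ne))).ne'
  calc (G □ H).dn ≤ _ := dn_le_ncard_edgeLengths hu
    _ ≤ _ := ncard_edgeLengths_boxProd_le hab hab' (hZinj.ne hab'.ne) u
    _ = G.dn + H.dn - 1 := by rw [hf_card, hg_card]

end SimpleGraph

/-- For all graphs `G` and `H` with at least one edge each,
`max {ddn G, ddn H} ≤ ddn (G □ H) ≤ ddn G + ddn H − 1` and
`max {dn G, dn H} ≤ dn (G □ H) ≤ dn G + dn H − 1`. -/
theorem stmt18 {V W : Type*} [Fintype V] [Fintype W]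
    (G : SimpleGraph V) (H : SimpleGraph W)
    (hG : G.edgeSet.Nonempty) (hH : H.edgeSet.Nonempty) :
    (max G.ddn H.ddn ≤ (G.boxProd H).ddn ∧ (G.boxProd H).ddn ≤ G.ddn + H.ddn - 1) ∧
    (max G.dn H.dn ≤ (G.boxProd H).dn ∧ (G.boxProd H).dn ≤ G.dn + H.dn - 1) := by
  obtain ⟨a, -, -⟩ := G.ne_bot_iff_exists_adj.mp (SimpleGraph.edgeSet_nonempty.mp hG)
  obtain ⟨b, -, -⟩ := H.ne_bot_iff_exists_adj.mp (SimpleGraph.edgeSet_nonempty.mp hH)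
  exact ⟨⟨max_le (G.boxProdLeft H b).ddn_le (G.boxProdRight H a).ddn_le,
      SimpleGraph.ddn_boxProd_le hG hH⟩,
    ⟨max_le (G.boxProdLeft H b).dn_le (G.boxProdRight H a).dn_le,
      SimpleGraph.dn_boxProd_le hG hH⟩⟩
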